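/- arXiv:1701.01544 — 2 statements merged into one kernel-verified Lean document; each statement's English description precedes it below -/
import Mathlib

section
/- For constants $\lambda, B, \alpha, d, t > 0$ and $H \sim \mathrm{Exp}(1)$, the NLoS intensity measure $\Lambda^{NL}_{Ray}([0,t]) = \mathbb{E}_H\left[2\pi\lambda \int_{r \in [0, t(BH)^{1/\alpha}],\, r > d} r\, dr\right]$ evaluates to $\pi\lambda t^2 B^{2/\alpha}\, \Gamma\!\left(\tfrac{2}{\alpha}+1,\ \tfrac{1}{B}\left(\tfrac{d}{t}\right)^{\alpha}\right) - \pi\lambda d^2 \exp\!\left[-\tfrac{1}{B}\left(\tfrac{d}{t}\right)^{\alpha}\right]$, where $\Gamma(s,x) = \int_x^\infty v^{s-1} e^{-v}\,dv$ is the upper incomplete gamma function. -/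
open MeasureTheory Real

/-- Upper incomplete gamma function `Γ(s,x) = ∫_x^∞ v^{s-1} e^{-v} dv`. -/
noncomputable def uGamma (s x : ℝ) : ℝ := ∫ v in Set.Ioi x, v ^ (s - 1) * Real.exp (-v)

/-- NLoS intensity measure under Rayleigh fading (`H ~ Exp(1)`) and a LoS
ball of radius `d`:
`E_H[2πλ ∫_{r∈[0,t(BH)^{1/α}], r>d} r dr]
  = πλt²B^{2/α} Γ(2/α+1, (d/t)^α/B) - πλd² exp(-(d/t)^α/B)`. -/
theorem rayleigh_nlos_intensity_measure (lam B α d t : ℝ)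
    (hlam : 0 < lam) (hB : 0 < B) (hα : 0 < α) (hd : 0 < d) (ht : 0 < t) :
    (∫ h in Set.Ioi (0 : ℝ),
        (2 * π * lam * ∫ r in Set.Ioc d (t * (B * h) ^ ((1 : ℝ)/α)), r) * Real.exp (-h))
      = π * lam * t ^ 2 * B ^ ((2 : ℝ)/α) * uGamma ((2 : ℝ)/α + 1) ((1/B) * (d/t) ^ α)
        - π * lam * d ^ 2 * Real.exp (-((1/B) * (d/t) ^ α)) := by
  have hπ := Real.pi_pos
  set c : ℝ := (1/B) * (d/t) ^ α with hc
  have hcpos : 0 < c := by positivity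
  set f : ℝ → ℝ := fun h =>
      (2 * π * lam * ∫ r in Set.Ioc d (t * (B * h) ^ ((1 : ℝ)/α)), r) * Real.exp (-h) with hf
  set g : ℝ → ℝ := fun h =>
      π * lam * t ^ 2 * B ^ ((2:ℝ)/α) * (h ^ ((2:ℝ)/α) * Real.exp (-h))
        - π * lam * d ^ 2 * Real.exp (-h) with hg
  -- threshold equivalence
  have key : ∀ h : ℝ, 0 < h → (c < h ↔ d < t * (B * h) ^ ((1:ℝ)/α)) := by
    intro h hh
    have h1 : c < h ↔ (d/t) ^ α < B * h := by
      rw [hc]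
      constructor
      · intro hch
        calc (d/t) ^ α = B * ((1/B) * (d/t)^α) := by field_simp
          _ < B * h := (mul_lt_mul_iff_right₀ hB).2 hch
      · intro hlt
        have := (div_lt_iff₀' hB).2 hlt
        calc (1/B) * (d/t)^α = (d/t)^α / B := by ring
          _ < h := this
    have h2 : (d/t) ^ α < B * h ↔ d/t < (B*h) ^ ((1:ℝ)/α) := by
      rw [← Real.rpow_lt_rpow_iff (x := (d/t)^α) (by positivity) (by positivity)
        (show (0:ℝ) < (1:ℝ)/α by positivity), ← Real.rpow_mul (by positivity),
        mul_one_div, div_self hα.ne', Real.rpow_one]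
    have h3 : d/t < (B*h) ^ ((1:ℝ)/α) ↔ d < t * (B*h) ^ ((1:ℝ)/α) := div_lt_iff₀' ht
    rw [h1, h2, h3]
  -- f vanishes on Ioc 0 c
  have hzero : Set.EqOn f 0 (Set.Ioc 0 c) := by
    intro h hh
    have hle : t * (B * h) ^ ((1:ℝ)/α) ≤ d := by
      by_contra hlt
      push_neg at hlt
      exact absurd ((key h hh.1).2 hlt) (not_lt.2 hh.2)
    show (2 * π * lam * ∫ r in Set.Ioc d (t * (B * h) ^ ((1:ℝ)/α)), r) * Real.exp (-h) = 0
    rw [Set.Ioc_eq_empty (not_lt.2 hle)]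
    simp
  -- f = g on Ioi c
  have hfg : Set.EqOn f g (Set.Ioi c) := by
    intro h hh
    have hh0 : 0 < h := hcpos.trans hh
    have hdlt : d < t * (B * h) ^ ((1:ℝ)/α) := (key h hh0).1 hh
    have hBh : (0:ℝ) ≤ B * h := by positivity
    have hinner : (∫ r in Set.Ioc d (t * (B * h) ^ ((1:ℝ)/α)), r)
        = ((t * (B * h) ^ ((1:ℝ)/α)) ^ 2 - d ^ 2) / 2 := by
      rw [← intervalIntegral.integral_of_le hdlt.le, integral_id]
    have hpow : (t * (B * h) ^ ((1:ℝ)/α)) ^ 2 = t ^ 2 * B ^ ((2:ℝ)/α) * h ^ ((2:ℝ)/α) := by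
      rw [mul_pow, ← Real.rpow_natCast ((B*h) ^ ((1:ℝ)/α)) 2, ← Real.rpow_mul hBh,
        Real.mul_rpow hB.le hh0.le]
      norm_num
      ring_nf
    simp only [hf, hg, hinner, hpow]
    ring
  have hmeasIoc : MeasurableSet (Set.Ioc (0:ℝ) c) := measurableSet_Ioc
  have hmeasIoi : MeasurableSet (Set.Ioi c) := measurableSet_Ioi
  -- integrability of g on Ioi c
  have hint1 : IntegrableOn (fun h : ℝ => h ^ ((2:ℝ)/α) * Real.exp (-h)) (Set.Ioi c) := by
    have := Real.GammaIntegral_convergent (s := (2:ℝ)/α + 1) (by positivity)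
    have h2 : IntegrableOn (fun h : ℝ => Real.exp (-h) * h ^ ((2:ℝ)/α + 1 - 1)) (Set.Ioi c) :=
      this.mono_set (Set.Ioi_subset_Ioi hcpos.le)
    refine h2.congr_fun ?_ hmeasIoi
    intro x _
    simp [mul_comm]
  have hint2 : IntegrableOn (fun h : ℝ => Real.exp (-h)) (Set.Ioi c) :=
    exp_neg_integrableOn_Ioi c one_pos |>.congr_fun (fun x _ => by simp) hmeasIoi
  have hgint : IntegrableOn g (Set.Ioi c) := by
    exact ((hint1.const_mul _).sub (hint2.const_mul _))
  have hfintIoi : IntegrableOn f (Set.Ioi c) := hgint.congr_fun hfg.symm hmeasIoi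
  have hfintIoc : IntegrableOn f (Set.Ioc 0 c) :=
    (integrableOn_zero).congr_fun hzero.symm hmeasIoc
  have hsplit : (∫ h in Set.Ioi (0:ℝ), f h)
      = (∫ h in Set.Ioc 0 c, f h) + ∫ h in Set.Ioi c, f h := by
    rw [← setIntegral_union (Set.Ioc_disjoint_Ioi le_rfl) hmeasIoi hfintIoc hfintIoi,
      Set.Ioc_union_Ioi_eq_Ioi hcpos.le]
  have hI1 : (∫ h in Set.Ioc 0 c, f h) = 0 := by
    rw [setIntegral_congr_fun hmeasIoc hzero]; simp
  have hI2 : (∫ h in Set.Ioi c, f h)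
      = π * lam * t ^ 2 * B ^ ((2:ℝ)/α) * uGamma ((2:ℝ)/α + 1) c
        - π * lam * d ^ 2 * Real.exp (-c) := by
    rw [setIntegral_congr_fun hmeasIoi hfg]
    rw [hg]
    rw [integral_sub (hint1.const_mul _) (hint2.const_mul _),
      integral_const_mul, integral_const_mul, integral_exp_neg_Ioi]
    congr 1
    unfold uGamma
    congr 1
    apply setIntegral_congr_fun hmeasIoi
    intro x _
    norm_num
  rw [hsplit, hI1, hI2]
  ring
end

section
/- For constants $\lambda, B, \alpha, d, t > 0$, $m > 0$, and $H$ Gamma distributed with shape $m$ and rate $m$ (density $f_H(h) = \frac{m^m}{\Gamma(m)} h^{m-1} e^{-mh}$), the LoS intensity measure $\Lambda^{L}_{Naka}([0,t]) = \mathbb{E}_H\left[2\pi\lambda \int_0^{\min\{d,\ t(BH)^{1/\alpha}\}} r\, dr\right]$ equals $\frac{\pi\lambda d^2}{\Gamma(m)}\Gamma\!\left(m, \tfrac{m}{B}\left(\tfrac{d}{t}\right)^{\alpha}\right) + \frac{\pi\lambda t^2}{\Gamma(m)}\left(\tfrac{B}{m}\right)^{2/\alpha}\gamma\!\left(\tfrac{2}{\alpha}+m,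 \tfrac{m}{B}\left(\tfrac{d}{t}\right)^{\alpha}\right)$, where $\Gamma(s,x)$ and $\gamma(s,x)$ are the upper and lower incomplete gamma functions. -/
/-!
With `R(h) = min d (t (B h)^{1/α})` the inner integral is `R(h)² / 2`, and `R(h) = d` exactly
when `h ≥ c := (d/t)^α / B`. Splitting the Gamma(m, m) expectation of `π λ R(H)²` at `c`, the
tail `h > c` contributes `d²` times a Gamma tail, while on `(0, c]` the factor
`R(h)² = t² B^{2/α} h^{2/α}` raises the shape of the Gamma integrand from `m` to `2/α + m`.
The substitution `v = m h` turns both pieces into incomplete gamma functions at `m c`.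
-/

open MeasureTheory Real

/-- Lower incomplete gamma function `γ(s,x) = ∫_0^x v^{s-1} e^{-v} dv`. -/
noncomputable def lGamma (s x : ℝ) : ℝ := ∫ v in Set.Ioc 0 x, v ^ (s - 1) * Real.exp (-v)

open Set

lemma integrableOn_rpow_mul_exp_neg_mul {m s : ℝ} (hm : 0 < m) (hs : 0 < s) :
    IntegrableOn (fun h : ℝ => h ^ (s - 1) * exp (-(m * h))) (Ioi 0) := by
  simpa [neg_mul] using
    integrableOn_rpow_mul_exp_neg_mul_rpow (p := 1) (by linarith : -1 < s - 1) one_pos hm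

lemma rpow_mul_exp_neg_mul_eq {m h : ℝ} (s : ℝ) (hm : 0 < m) (hh : 0 ≤ h) :
    h ^ (s - 1) * exp (-(m * h)) = m ^ (1 - s) * ((m * h) ^ (s - 1) * exp (-(m * h))) := by
  rw [mul_rpow hm.le hh, ← mul_assoc, ← mul_assoc, ← rpow_add hm]
  simp

lemma rpow_one_sub_mul_inv {m : ℝ} (s : ℝ) (hm : 0 < m) : m ^ (1 - s) * m⁻¹ = m ^ (-s) := by
  rw [← div_eq_mul_inv, ← rpow_sub_one hm.ne']
  ring_nf

theorem setIntegral_Ioi_rpow_mul_exp_neg_mul {m c : ℝ} (s : ℝ) (hm : 0 < m) (hc : 0 ≤ c) :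
    ∫ h in Ioi c, h ^ (s - 1) * exp (-(m * h)) = m ^ (-s) * uGamma s (m * c) := by
  rw [setIntegral_congr_fun measurableSet_Ioi
      fun h hh => rpow_mul_exp_neg_mul_eq s hm (hc.trans (le_of_lt hh)),
    integral_const_mul, integral_comp_mul_left_Ioi (fun v => v ^ (s - 1) * exp (-v)) c hm,
    smul_eq_mul, ← mul_assoc, rpow_one_sub_mul_inv s hm, uGamma]

theorem setIntegral_Ioc_rpow_mul_exp_neg_mul {m c : ℝ} (s : ℝ) (hm : 0 < m) (hc : 0 ≤ c) :
    ∫ h in Ioc 0 c, h ^ (s - 1) * exp (-(m * h)) = m ^ (-s) * lGamma s (m * c) := by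
  rw [lGamma, ← intervalIntegral.integral_of_le hc,
    ← intervalIntegral.integral_of_le (by positivity : 0 ≤ m * c),
    intervalIntegral.integral_congr fun h hh =>
      rpow_mul_exp_neg_mul_eq s hm (uIcc_of_le hc ▸ hh).1,
    intervalIntegral.integral_const_mul,
    intervalIntegral.integral_comp_mul_left (fun v => v ^ (s - 1) * exp (-v)) hm.ne',
    mul_zero, smul_eq_mul, ← mul_assoc, rpow_one_sub_mul_inv s hm]

lemma integral_Ioc_zero_id {a : ℝ} (ha : 0 ≤ a) : ∫ r in Ioc 0 a, r = a ^ 2 / 2 := by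
  rw [← intervalIntegral.integral_of_le ha, integral_id]
  ring

/-- The upper limit `min {d, t (B h)^{1/α}}` of the radial integral in `Λ^L_{Naka}([0, t])`. -/
noncomputable def losRange (d t B α h : ℝ) : ℝ := min d (t * (B * h) ^ (1 / α))

section losRange

variable {d t B α : ℝ}

lemma losRange_nonneg (hd : 0 ≤ d) (ht : 0 ≤ t) (hB : 0 ≤ B) {h : ℝ} (hh : 0 ≤ h) :
    0 ≤ losRange d t B α h :=
  le_min hd (by positivity)

lemma losRange_le (h : ℝ) : losRange d t B α h ≤ d := min_le_left _ _

lemma mul_rpow_one_div_le_iff (hd : 0 ≤ d) (ht : 0 < t) (hB : 0 < B) (hα : 0 < α) {h : ℝ}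
    (hh : 0 ≤ h) : t * (B * h) ^ (1 / α) ≤ d ↔ h ≤ (d / t) ^ α / B := by
  rw [← le_div_iff₀' ht, one_div, rpow_inv_le_iff_of_pos (by positivity) (by positivity) hα,
    le_div_iff₀' hB]

lemma losRange_of_le (hd : 0 ≤ d) (ht : 0 < t) (hB : 0 < B) (hα : 0 < α) {h : ℝ}
    (hh : (d / t) ^ α / B ≤ h) : losRange d t B α h = d := by
  have hh₀ : 0 ≤ h := le_trans (by positivity) hh
  rw [losRange, min_eq_left]
  rwa [← div_le_iff₀' ht, one_div, le_rpow_inv_iff_of_pos (by positivity) (by positivity) hα,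
    ← div_le_iff₀' hB]

lemma losRange_sq_of_le (hd : 0 ≤ d) (ht : 0 < t) (hB : 0 < B) (hα : 0 < α) {h : ℝ}
    (hh₀ : 0 ≤ h) (hh : h ≤ (d / t) ^ α / B) :
    losRange d t B α h ^ 2 = t ^ 2 * B ^ (2 / α) * h ^ (2 / α) := by
  rw [losRange, min_eq_right ((mul_rpow_one_div_le_iff hd ht hB hα hh₀).2 hh), mul_pow,
    ← rpow_mul_natCast (by positivity), mul_rpow hB.le hh₀]
  ring_nf

lemma integrableOn_losRange_sq_mul (hd : 0 ≤ d) (ht : 0 ≤ t) (hB : 0 ≤ B) {m s : ℝ}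
    (hm : 0 < m) (hs : 0 < s) :
    IntegrableOn (fun h => losRange d t B α h ^ 2 * (h ^ (s - 1) * exp (-(m * h)))) (Ioi 0) := by
  refine (integrableOn_rpow_mul_exp_neg_mul hm hs).bdd_mul (c := d ^ 2)
    (by unfold losRange; exact Measurable.aestronglyMeasurable (by fun_prop)) ?_
  filter_upwards [ae_restrict_mem measurableSet_Ioi] with h hh
  rw [norm_pow, norm_of_nonneg (losRange_nonneg hd ht hB (le_of_lt hh))]
  exact pow_le_pow_left₀ (losRange_nonneg hd ht hB (le_of_lt hh)) (losRange_le h) 2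

theorem integral_losRange_sq_mul_rpow_mul_exp_neg_mul (hd : 0 ≤ d) (ht : 0 < t) (hB : 0 < B)
    (hα : 0 < α) {m : ℝ} (hm : 0 < m) :
    ∫ h in Ioi 0, losRange d t B α h ^ 2 * (h ^ (m - 1) * exp (-(m * h)))
      = d ^ 2 * (m ^ (-m) * uGamma m (m / B * (d / t) ^ α))
        + t ^ 2 * B ^ (2 / α)
          * (m ^ (-(2 / α + m)) * lGamma (2 / α + m) (m / B * (d / t) ^ α)) := by
  set c := (d / t) ^ α / B with hc_def
  have hc : 0 ≤ c := by positivity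
  have h_far : EqOn (fun h => losRange d t B α h ^ 2 * (h ^ (m - 1) * exp (-(m * h))))
      (fun h => d ^ 2 * (h ^ (m - 1) * exp (-(m * h)))) (Ioi c) := fun h hh => by
    simp only [losRange_of_le hd ht hB hα (le_of_lt hh)]
  have h_near : EqOn (fun h => losRange d t B α h ^ 2 * (h ^ (m - 1) * exp (-(m * h))))
      (fun h => t ^ 2 * B ^ (2 / α) * (h ^ (2 / α + m - 1) * exp (-(m * h)))) (Ioc 0 c) :=
    fun h hh => by
      simp only [losRange_sq_of_le hd ht hB hα hh.1.le hh.2, add_sub_assoc, rpow_add hh.1]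
      ring
  have hint := integrableOn_losRange_sq_mul (α := α) hd ht.le hB.le hm hm
  rw [← Ioc_union_Ioi_eq_Ioi hc, setIntegral_union Ioc_disjoint_Ioi_same measurableSet_Ioi
      (hint.mono_set Ioc_subset_Ioi_self) (hint.mono_set (Ioi_subset_Ioi hc)),
    setIntegral_congr_fun measurableSet_Ioc h_near, setIntegral_congr_fun measurableSet_Ioi h_far,
    integral_const_mul, integral_const_mul, setIntegral_Ioi_rpow_mul_exp_neg_mul m hm hc,
    setIntegral_Ioc_rpow_mul_exp_neg_mul _ hm hc,
    show m * c = m / B * (d / t) ^ α by rw [hc_def]; ring, add_comm]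

end losRange

theorem nakagami_los_intensity_measure_general (lam B α d t m : ℝ)
    (hB : 0 < B) (hα : 0 < α) (hd : 0 < d) (ht : 0 < t) (hm : 0 < m) :
    (∫ h in Set.Ioi (0 : ℝ),
        (2 * π * lam * ∫ r in Set.Ioc 0 (min d (t * (B * h) ^ ((1 : ℝ)/α))), r)
          * (m ^ m / Real.Gamma m * h ^ (m - 1) * Real.exp (-(m * h))))
      = π * lam * d ^ 2 / Real.Gamma m * uGamma m ((m/B) * (d/t) ^ α)
        + π * lam * t ^ 2 / Real.Gamma m * (B/m) ^ ((2 : ℝ)/α)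
            * lGamma ((2 : ℝ)/α + m) ((m/B) * (d/t) ^ α) := by
  have h_integrand : ∀ h ∈ Ioi (0 : ℝ),
      (2 * π * lam * ∫ r in Ioc 0 (losRange d t B α h), r)
        * (m ^ m / Gamma m * h ^ (m - 1) * exp (-(m * h)))
      = π * lam * (m ^ m / Gamma m) * (losRange d t B α h ^ 2 * (h ^ (m - 1) * exp (-(m * h)))) :=
    fun h hh => by
      rw [integral_Ioc_zero_id (losRange_nonneg hd.le ht.le hB.le (le_of_lt hh))]
      ring
  refine (setIntegral_congr_fun measurableSet_Ioi h_integrand).trans ?_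
  rw [integral_const_mul, integral_losRange_sq_mul_rpow_mul_exp_neg_mul hd.le ht hB hα hm]
  have hm_pow : m ^ m * m ^ (-m) = 1 := by rw [← rpow_add hm]; simp
  have hBm : (B / m) ^ (2 / α) = B ^ (2 / α) * m ^ m * m ^ (-(2 / α + m)) := by
    rw [div_rpow hB.le hm.le, rpow_neg hm.le, rpow_add hm]
    field_simp
  rw [hBm]
  linear_combination (π * lam * d ^ 2 / Gamma m * uGamma m (m / B * (d / t) ^ α)) * hm_pow

/-- LoS intensity measure under Nakagami-`m` fading (`H ~ Gamma(m,m)`)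
with LoS ball of radius `d`:
`E_H[2πλ ∫_0^{min(d, t(BH)^{1/α})} r dr]
  = (πλd²/Γ(m)) Γ(m, (m/B)(d/t)^α) + (πλt²/Γ(m)) (B/m)^{2/α} γ(2/α+m, (m/B)(d/t)^α)`. -/
theorem nakagami_los_intensity_measure (lam B α d t m : ℝ)
    (hlam : 0 < lam) (hB : 0 < B) (hα : 0 < α) (hd : 0 < d) (ht : 0 < t) (hm : 0 < m) :
    (∫ h in Set.Ioi (0 : ℝ),
        (2 * π * lam * ∫ r in Set.Ioc 0 (min d (t * (B * h) ^ ((1 : ℝ)/α))), r)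
          * (m ^ m / Real.Gamma m * h ^ (m - 1) * Real.exp (-(m * h))))
      = π * lam * d ^ 2 / Real.Gamma m * uGamma m ((m/B) * (d/t) ^ α)
        + π * lam * t ^ 2 / Real.Gamma m * (B/m) ^ ((2 : ℝ)/α)
            * lGamma ((2 : ℝ)/α + m) ((m/B) * (d/t) ^ α) :=
  nakagami_los_intensity_measure_general lam B α d t m hB hα hd ht hm
end
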